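/- Let A be a clone algebra. Then (1) the algebra A^cm is a canonical and finitely ranked cm-monoid, and (2) if A is finite dimensional then A^cm is a finite dimensional cm-monoid. -/
import Mathlib


universe u

open scoped Classical

/-- A finite permutation of ω: an element of S_ω, i.e. a permutation moving
only finitely many points. -/
def FinPerm (σ : Equiv.Perm ℕ) : Prop := {n : ℕ | σ n ≠ n}.Finite

/-- The raw operations of a merge algebra: the binary merges `⋆_n` and the
actions `σ̄` of (finite) permutations. -/
structure MergeOps (A : Type u) where
  star : ℕ → A → A → A
  bar : Equiv.Perm ℕ → A → A

namespace MergeOps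

variable {A : Type u}

/-- `chain g k = ((g 0 ⋆_1 g 1) ⋆_2 g 2) … ⋆_k (g k)`. -/
def chain (M : MergeOps A) (g : ℕ → A) : ℕ → A
  | 0 => g 0
  | i + 1 => M.star (i + 1) (M.chain g i) (g (i + 1))

/-- `chainStar g k y = ((…(g 0 ⋆_1 g 1) ⋆_2 …) ⋆_{k-1} g (k-1)) ⋆_k y`. -/
def chainStar (M : MergeOps A) (g : ℕ → A) (k : ℕ) (y : A) : A :=
  match k with
  | 0 => y
  | k + 1 => M.star (k + 1) (M.chain g k) y

/-- The `n`-coordinate of `x` relative to the coordinator `pt`: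
`x[n] = τ̄^n_0(x) ⋆_1 pt`. -/
def coord (M : MergeOps A) (pt x : A) (n : ℕ) : A :=
  M.star 1 (M.bar (Equiv.swap 0 n) x) pt

end MergeOps

/-- A merge algebra: operations `⋆_n` and `σ̄` satisfying axioms (B1)–(B7). -/
structure MergeAlgebra (A : Type u) extends MergeOps A where
  /-- (B1) each `⋆_n` is associative -/
  star_assoc : ∀ (n : ℕ) (x y z : A), star n (star n x y) z = star n x (star n y z)
  /-- (B1) each `⋆_n` is idempotent -/
  star_idem : ∀ (n : ℕ) (x : A), star n x x = x
  /-- (B2) -/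
  star_zero : ∀ x y : A, star 0 x y = y
  /-- (B3), first part (k ≥ n) -/
  B3a : ∀ {n k : ℕ}, n ≤ k → ∀ x y z : A, star n (star k x y) z = star n x z
  /-- (B3), second part (k ≥ n) -/
  B3b : ∀ {n k : ℕ}, n ≤ k → ∀ x y z : A, star k x (star n y z) = star k x z
  /-- (B4) (k < n) -/
  B4 : ∀ {n k : ℕ}, k < n → ∀ x y z : A, star n (star k x y) z = star k x (star n y z)
  /-- (B5) `σ̄(τ̄(x)) = (τ∘σ)‾(x)` -/
  B5 : ∀ σ τ : Equiv.Perm ℕ, FinPerm σ → FinPerm τ → ∀ x : A,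
      bar σ (bar τ x) = bar (τ * σ) x
  /-- (B5) `ῑ(x) = x` -/
  bar_id : ∀ x : A, bar 1 x = x
  /-- (B6): for `n ≤ k` and `σ` a permutation of `k`, with `f i = x` iff `σ i < n`:
  `σ̄(x ⋆_n y) = ((…(σ̄(f 0) ⋆_1 σ̄(f 1)) ⋆_2 …) ⋆_{k-1} σ̄(f (k-1))) ⋆_k y`. -/
  B6 : ∀ {n k : ℕ}, n ≤ k → ∀ σ : Equiv.Perm ℕ, (∀ i, k ≤ i → σ i = i) →
      ∀ x y : A, bar σ (star n x y) =
        toMergeOps.chainStar (fun i => bar σ (if σ i < n then x else y)) k y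
  /-- (B7) -/
  B7 : ∀ {m n : ℕ} (σ τ : Equiv.Perm ℕ), FinPerm σ → FinPerm τ →
      (∀ i, m ≤ i → i < n → σ i = τ i) →
      ∀ x y z : A, star n (star m z (bar σ x)) y = star n (star m z (bar τ x)) y

/-- An m-monoid: a monoid structure together with a merge algebra structure on
the same carrier, satisfying right distributivity (L1). -/
structure MMonoid (A : Type u) extends MergeAlgebra A where
  mul : A → A → A
  one : A
  mul_assoc : ∀ x y z : A, mul (mul x y) z = mul x (mul y z)
  one_mul : ∀ x : A, mul one x = x
  mul_one : ∀ x : A, mul x one = x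
  /-- (L1) right distributivity -/
  L1 : ∀ (n : ℕ) (x y z : A), mul (star n x y) z = star n (mul x z) (mul y z)

namespace MMonoid

variable {A : Type u} (M : MMonoid A)

/-- A cm-monoid is an m-monoid satisfying (L2): `σ̄(x)·y = σ̄(x·y)`. -/
def IsCM : Prop :=
  ∀ σ : Equiv.Perm ℕ, FinPerm σ → ∀ x y : A, M.mul (M.bar σ x) y = M.bar σ (M.mul x y)

/-- An am-monoid is an m-monoid satisfying (L3): `σ̄(x·y) = σ̄(x)·σ̄(y)`. -/
def IsAM : Prop :=
  ∀ σ : Equiv.Perm ℕ, FinPerm σ → ∀ x y : A, M.bar σ (M.mul x y) = M.mul (M.bar σ x) (M.bar σ y)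

/-- The `n`-coordinate `x[n] = τ̄^n_0(x) ⋆_1 1` (the coordinator is the unit). -/
def coord (x : A) (n : ℕ) : A := M.toMergeOps.coord M.one x n

/-- Extensionality: elements with the same coordinates are equal. -/
def Extensional : Prop := ∀ x y : A, (∀ n : ℕ, M.coord x n = M.coord y n) → x = y

/-- An element has rank ≤ n iff `x ⋆_n 1 = x`; the m-monoid is finitely ranked
if every element has finite rank. -/
def FinitelyRanked : Prop := ∀ x : A, ∃ n : ℕ, M.star n x M.one = x

/-- A degenerate m-monoid. -/
def Degenerate : Prop :=
  (∀ σ : Equiv.Perm ℕ, FinPerm σ → ∀ x : A, M.bar σ x = x) ∧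
    (∀ (n : ℕ) (x y : A), M.star n x y = y)

/-- `a` is finite dimensional: for every `n` there is `m` with
`(a·(1 ⋆_m b ⋆_{m+k} 1)) ⋆_n a = a` for all `b` and `k`. -/
def FinDimEl (a : A) : Prop :=
  ∀ n : ℕ, ∃ m : ℕ, ∀ (b : A) (k : ℕ),
    M.star n (M.mul a (M.star (m + k) (M.star m M.one b) M.one)) a = a

/-- `a` is ω-finite dimensional: for every `n` there is `m` with
`(a·(1 ⋆_m b)) ⋆_n a = a` for all `b`. -/
def OmegaFinDimEl (a : A) : Prop :=
  ∀ n : ℕ, ∃ m : ℕ, ∀ b : A,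
    M.star n (M.mul a (M.star m M.one b)) a = a

/-- An m-monoid is finite dimensional if every element is. -/
def FinDim : Prop := ∀ a : A, M.FinDimEl a

/-- An m-monoid is ω-finite dimensional if every element is. -/
def OmegaFinDim : Prop := ∀ a : A, M.OmegaFinDimEl a

end MMonoid

/-- A clone algebra: constants `e_n` and operations `q_n` of arity `n+1`
satisfying axioms (C1)–(C5). -/
structure CloneAlgebra (A : Type u) where
  e : ℕ → A
  q : (n : ℕ) → A → (Fin n → A) → A
  /-- (C1) -/
  C1 : ∀ (n : ℕ) (i : Fin n) (x : Fin n → A), q n (e i) x = x i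
  /-- (C2) -/
  C2 : ∀ (n j : ℕ) (x : Fin n → A), n ≤ j → q n (e j) x = e j
  /-- (C3) -/
  C3 : ∀ (n : ℕ) (x : A), q n x (fun i => e i) = x
  /-- (C4) -/
  C4 : ∀ (n k : ℕ), n < k → ∀ (x : A) (y : Fin n → A),
      q n x y = q k x (fun i => if h : (i : ℕ) < n then y ⟨i, h⟩ else e i)
  /-- (C5) -/
  C5 : ∀ (n : ℕ) (x : A) (y z : Fin n → A),
      q n (q n x y) z = q n x (fun i => q n (y i) z)

namespace CloneAlgebra

variable {A : Type u} (C : CloneAlgebra A)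

/-- `a` is independent of `e_n` if `q_{n+1}(a, e_0, …, e_{n-1}, e_{n+1}) = a`. -/
def IndepOf (a : A) (n : ℕ) : Prop :=
  C.q (n + 1) a (fun i => if (i : ℕ) < n then C.e i else C.e (n + 1)) = a

/-- A clone algebra is finite dimensional if every element depends on only
finitely many `e_n`. -/
def FinDim : Prop := ∀ a : A, {n : ℕ | ¬ C.IndepOf a n}.Finite

end CloneAlgebra


namespace CloneCM

variable {A : Type u} (C : CloneAlgebra A)

/-- The basic trace carrier. -/
abbrev Carrier (C : CloneAlgebra A) := {s : ℕ → A // {i : ℕ | s i ≠ C.e i}.Finite}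

def starFn (n : ℕ) (s u : Carrier C) : Carrier C :=
  ⟨fun i => if i < n then s.1 i else u.1 i, by
    apply Set.Finite.subset (s.2.union u.2)
    intro i hi
    simp only [Set.mem_setOf_eq, Set.mem_union] at hi ⊢
    by_cases h : i < n
    · rw [if_pos h] at hi; exact Or.inl hi
    · rw [if_neg h] at hi; exact Or.inr hi⟩

@[simp] lemma starFn_val (n : ℕ) (s u : Carrier C) (i : ℕ) :
    (starFn C n s u).1 i = if i < n then s.1 i else u.1 i := rfl

noncomputable def barFn (σ : Equiv.Perm ℕ) (s : Carrier C) : Carrier C :=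
  if h : FinPerm σ then
    ⟨fun i => s.1 (σ i), by
      have h1 : {i : ℕ | s.1 (σ i) ≠ C.e (σ i)}.Finite := by
        have he : {i : ℕ | s.1 (σ i) ≠ C.e (σ i)} = σ ⁻¹' {i | s.1 i ≠ C.e i} := rfl
        rw [he]
        exact s.2.preimage σ.injective.injOn
      apply Set.Finite.subset (h1.union h)
      intro i hi
      simp only [Set.mem_setOf_eq, Set.mem_union] at hi ⊢
      by_cases hσ : σ i = i
      · left; rw [hσ]; rw [hσ] at hi; exact hi
      · right; exact hσ⟩
  else s

lemma barFn_val {σ : Equiv.Perm ℕ} (h : FinPerm σ) (s : Carrier C) (i : ℕ) :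
    (barFn C σ s).1 i = s.1 (σ i) := by simp [barFn, h]

noncomputable def kOf (s : Carrier C) : ℕ := s.2.toFinset.sup id + 1

lemma kOf_spec (s : Carrier C) : ∀ i, kOf C s ≤ i → s.1 i = C.e i := by
  intro i hi
  by_contra h
  have hmem : i ∈ s.2.toFinset := by simp only [Set.Finite.mem_toFinset, Set.mem_setOf_eq]; exact h
  have hle := Finset.le_sup (f := id) hmem
  simp only [id] at hle
  simp only [kOf] at hi
  omega

def qk (k : ℕ) (x : A) (s : ℕ → A) : A := C.q k x (fun i => s i)

lemma qk_mono {k k' : ℕ} (hkk : k ≤ k') {s : ℕ → A} (hs : ∀ i, k ≤ i → s i = C.e i) (x : A) :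
    qk C k x s = qk C k' x s := by
  rcases eq_or_lt_of_le hkk with rfl | h
  · rfl
  · unfold qk
    rw [C.C4 k k' h]
    congr 1
    funext i
    by_cases hik : (i : ℕ) < k
    · rw [dif_pos hik]
    · rw [dif_neg hik]
      exact (hs i (le_of_not_gt hik)).symm

noncomputable def oneC : Carrier C :=
  ⟨fun i => C.e i, by
    have : {i : ℕ | C.e i ≠ C.e i} = ∅ := by ext i; simp
    rw [this]; exact Set.finite_empty⟩

noncomputable def mulFn (b a : Carrier C) : Carrier C :=
  ⟨fun n => qk C (kOf C a) (b.1 n) a.1, by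
    apply Set.Finite.subset (b.2.union (Set.finite_Iio (kOf C a)))
    intro n hn
    simp only [Set.mem_setOf_eq, Set.mem_union, Set.mem_Iio] at hn ⊢
    by_cases h1 : n < kOf C a
    · exact Or.inr h1
    · refine Or.inl fun hb => hn ?_
      rw [hb]
      exact C.C2 _ n _ (le_of_not_gt h1)⟩

lemma mul_val (b a : Carrier C) (k : ℕ) (hk : ∀ i, k ≤ i → a.1 i = C.e i) :
    (mulFn C b a).1 = fun n => qk C k (b.1 n) a.1 := by
  funext n
  show qk C (kOf C a) (b.1 n) a.1 = qk C k (b.1 n) a.1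
  rcases le_total (kOf C a) k with h | h
  · exact qk_mono C h (kOf_spec C a) _
  · exact (qk_mono C h hk _).symm

lemma finPerm_mul {σ τ : Equiv.Perm ℕ} (hσ : FinPerm σ) (hτ : FinPerm τ) :
    FinPerm (σ * τ) := by
  apply Set.Finite.subset (hσ.union hτ)
  intro i hi
  simp only [Set.mem_setOf_eq, Set.mem_union] at hi ⊢
  by_contra h
  push_neg at h
  exact hi (by rw [Equiv.Perm.mul_apply, h.2, h.1])

/-- Lemma W : clearing all coordinates from `t` up, given independence. -/
lemma lemW (x : A) (K : ℕ) :
    ∀ d t, t + d = K → (∀ i, t ≤ i → i < K → C.IndepOf x i) →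
    C.q K x (fun i : Fin K => if (i : ℕ) < t then C.e i else C.e K) = x := by
  intro d
  induction d with
  | zero =>
    intro t ht _
    subst ht
    have hfun : (fun i : Fin (t+0) => if (i : ℕ) < t then C.e i else C.e (t+0)) =
        fun i : Fin (t+0) => C.e i := by
      funext i
      have : (i : ℕ) < t := by have := i.2; omega
      rw [if_pos this]
    rw [hfun]
    exact C.C3 _ x
  | succ d ih =>
    intro t ht hind
    have hW := ih (t + 1) (by omega) (fun i h1 h2 => hind i (by omega) h2)
    have hid : C.IndepOf x t := hind t le_rfl (by omega)
    unfold CloneAlgebra.IndepOf at hid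
    rcases eq_or_lt_of_le (show t + 1 ≤ K by omega) with hK | hK
    · -- t + 1 = K
      have : C.q K x (fun i : Fin K => if (i : ℕ) < t then C.e i else C.e K) =
          C.q (t+1) x (fun i : Fin (t+1) => if (i : ℕ) < t then C.e i else C.e (t+1)) := by
        subst hK; rfl
      rw [this, hid]
    · -- t + 1 < K
      have hid2 : C.q K x (fun i : Fin K =>
          if (i : ℕ) < t + 1 then (if (i : ℕ) < t then C.e i else C.e (t+1)) else C.e i) = x := by
        have h4 := C.C4 (t+1) K hK x (fun i : Fin (t+1) => if (i : ℕ) < t then C.e i else C.e (t+1))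
        exact h4.symm.trans hid
      have h5 := C.C5 K x
        (fun i : Fin K => if (i : ℕ) < t + 1 then (if (i : ℕ) < t then C.e i else C.e (t+1)) else C.e i)
        (fun i : Fin K => if (i : ℕ) < t + 1 then C.e i else C.e K)
      rw [hid2, hW] at h5
      -- h5 : x = q K x (inner)
      have hfun : (fun i : Fin K => C.q K
          ((fun i : Fin K => if (i : ℕ) < t + 1 then (if (i : ℕ) < t then C.e i else C.e (t+1)) else C.e i) i)
          (fun i : Fin K => if (i : ℕ) < t + 1 then C.e i else C.e K)) =
          (fun i : Fin K => if (i : ℕ) < t then C.e i else C.e K) := by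
        funext i
        by_cases h1 : (i : ℕ) < t
        · have h2 : (i : ℕ) < t + 1 := by omega
          simp only [if_pos h1, if_pos h2]
          have := C.C1 K i (fun i : Fin K => if (i : ℕ) < t + 1 then C.e i else C.e K)
          rw [this, if_pos h2]
        · by_cases h2 : (i : ℕ) < t + 1
          · -- i = t
            simp only [if_pos h2, if_neg h1]
            have ht1 : t + 1 < K := hK
            have := C.C1 K ⟨t+1, ht1⟩ (fun i : Fin K => if (i : ℕ) < t + 1 then C.e i else C.e K)
            simp only at this
            rw [this, if_neg (show ¬ (t + 1 < t + 1) by omega)]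
          · simp only [if_neg h2, if_neg h1]
            have := C.C1 K i (fun i : Fin K => if (i : ℕ) < t + 1 then C.e i else C.e K)
            rw [this, if_neg h2]
      rw [hfun] at h5
      exact h5.symm

/-- Lemma J : substitution with identity below `m` fixes elements independent
of all `e_i` for `i ≥ m`. -/
lemma lemJ (x : A) (m K : ℕ) (hind : ∀ i, m ≤ i → i < K → C.IndepOf x i)
    (y : Fin K → A) (hy : ∀ i : Fin K, (i : ℕ) < m → y i = C.e i) :
    C.q K x y = x := by
  rcases le_total m K with hmK | hmK
  · have hW := lemW C x K (K - m) m (by omega) hind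
    have h5 := C.C5 K x (fun i : Fin K => if (i : ℕ) < m then C.e i else C.e K) y
    rw [hW] at h5
    -- h5 : q K x y = q K x (fun i => q K (w i) y)
    rw [h5]
    have hfun : (fun i : Fin K => C.q K
        ((fun i : Fin K => if (i : ℕ) < m then C.e i else C.e K) i) y) =
        (fun i : Fin K => if (i : ℕ) < m then C.e i else C.e K) := by
      funext i
      by_cases h : (i : ℕ) < m
      · simp only [if_pos h]
        rw [C.C1 K i y]
        exact hy i h
      · simp only [if_neg h]
        exact C.C2 K K y le_rfl
    rw [hfun, hW]
  · have : y = fun i : Fin K => C.e i := funext fun i => hy i (lt_of_lt_of_le i.2 hmK)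
    rw [this]
    exact C.C3 K x

end CloneCM

namespace CloneCM

variable {A : Type u} (C : CloneAlgebra A)

noncomputable def ops : MergeOps (Carrier C) := ⟨starFn C, barFn C⟩

lemma chain_val (f : ℕ → Carrier C) : ∀ j i, ((ops C).chain f j).1 i = (f (min i j)).1 i := by
  intro j
  induction j with
  | zero => intro i; simp [MergeOps.chain]
  | succ j ih =>
    intro i
    show (starFn C (j+1) ((ops C).chain f j) (f (j+1))).1 i = _
    rw [starFn_val]
    by_cases h : i < j + 1
    · rw [if_pos h, ih i]
      have : min i j = min i (j+1) := by omega
      rw [this]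
    · rw [if_neg h]
      have : min i (j+1) = j + 1 := by omega
      rw [this]

lemma chainStar_val (f : ℕ → Carrier C) (k : ℕ) (y : Carrier C) (i : ℕ) :
    ((ops C).chainStar f k y).1 i = if i < k then (f i).1 i else y.1 i := by
  cases k with
  | zero => simp [MergeOps.chainStar]
  | succ k =>
    show (starFn C (k+1) ((ops C).chain f k) y).1 i = _
    rw [starFn_val]
    by_cases h : i < k + 1
    · rw [if_pos h, if_pos h, chain_val]
      have : min i k = i := by omega
      rw [this]
    · rw [if_neg h, if_neg h]

noncomputable def mergeAlg : MergeAlgebra (Carrier C) where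
  toMergeOps := ops C
  star_assoc := by
    intro n x y z
    apply Subtype.ext; funext i
    show (starFn C n (starFn C n x y) z).1 i = (starFn C n x (starFn C n y z)).1 i
    simp only [starFn_val]
    split_ifs <;> rfl
  star_idem := by
    intro n x
    apply Subtype.ext; funext i
    show (starFn C n x x).1 i = x.1 i
    rw [starFn_val]; split_ifs <;> rfl
  star_zero := by
    intro x y
    apply Subtype.ext; funext i
    show (starFn C 0 x y).1 i = y.1 i
    rw [starFn_val, if_neg (by omega)]
  B3a := by
    intro n k hnk x y z
    apply Subtype.ext; funext i
    show (starFn C n (starFn C k x y) z).1 i = (starFn C n x z).1 i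
    simp only [starFn_val]
    split_ifs <;> first | rfl | omega
  B3b := by
    intro n k hnk x y z
    apply Subtype.ext; funext i
    show (starFn C k x (starFn C n y z)).1 i = (starFn C k x z).1 i
    simp only [starFn_val]
    split_ifs <;> first | rfl | omega
  B4 := by
    intro n k hkn x y z
    apply Subtype.ext; funext i
    show (starFn C n (starFn C k x y) z).1 i = (starFn C k x (starFn C n y z)).1 i
    simp only [starFn_val]
    split_ifs <;> first | rfl | omega
  B5 := by
    intro σ τ hσ hτ x
    apply Subtype.ext; funext i
    show (barFn C σ (barFn C τ x)).1 i = (barFn C (τ * σ) x).1 i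
    rw [barFn_val C hσ, barFn_val C hτ, barFn_val C (finPerm_mul hτ hσ)]
    rfl
  bar_id := by
    intro x
    apply Subtype.ext; funext i
    show (barFn C 1 x).1 i = x.1 i
    have h1 : FinPerm (1 : Equiv.Perm ℕ) := by
      have : {n : ℕ | (1 : Equiv.Perm ℕ) n ≠ n} = ∅ := by ext n; simp
      rw [FinPerm, this]; exact Set.finite_empty
    rw [barFn_val C h1]
    rfl
  B6 := by
    intro n k hnk σ hfix x y
    have hσ : FinPerm σ := by
      apply Set.Finite.subset (Set.finite_Iio k)
      intro i hi
      simp only [Set.mem_setOf_eq] at hi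
      simp only [Set.mem_Iio]
      by_contra h
      exact hi (hfix i (le_of_not_gt h))
    apply Subtype.ext; funext i
    show (barFn C σ (starFn C n x y)).1 i = _
    rw [barFn_val C hσ, starFn_val]
    rw [chainStar_val]
    by_cases h : i < k
    · rw [if_pos h]
      show _ = (barFn C σ (if σ i < n then x else y)).1 i
      rw [barFn_val C hσ]
      rw [apply_ite (fun z : Carrier C => z.1 (σ i))]
    · rw [if_neg h]
      have hfi := hfix i (le_of_not_gt h)
      rw [hfi, if_neg (by omega)]
  B7 := by
    intro m n σ τ hσ hτ hagree x y z
    apply Subtype.ext; funext i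
    show (starFn C n (starFn C m z (barFn C σ x)) y).1 i =
      (starFn C n (starFn C m z (barFn C τ x)) y).1 i
    simp only [starFn_val, barFn_val C hσ, barFn_val C hτ]
    by_cases h1 : i < n
    · rw [if_pos h1, if_pos h1]
      by_cases h2 : i < m
      · rw [if_pos h2, if_pos h2]
      · rw [if_neg h2, if_neg h2, hagree i (le_of_not_gt h2) h1]
    · rw [if_neg h1, if_neg h1]

noncomputable def mmonoid : MMonoid (Carrier C) where
  toMergeAlgebra := mergeAlg C
  mul := mulFn C
  one := oneC C
  mul_assoc := by
    intro b c a
    apply Subtype.ext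
    set k := max (kOf C c) (kOf C a) with hk
    have h1 : ∀ i, k ≤ i → c.1 i = C.e i := fun i hi =>
      kOf_spec C c i (le_trans (le_max_left _ _) hi)
    have h2 : ∀ i, k ≤ i → a.1 i = C.e i := fun i hi =>
      kOf_spec C a i (le_trans (le_max_right _ _) hi)
    have hca : ∀ i, k ≤ i → (mulFn C c a).1 i = C.e i := by
      intro i hi
      show qk C (kOf C a) (c.1 i) a.1 = C.e i
      rw [h1 i hi]
      exact C.C2 _ i _ (le_trans (le_max_right _ _) hi)
    funext j
    have e1 : (mulFn C (mulFn C b c) a).1 j = qk C k ((mulFn C b c).1 j) a.1 :=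
      congrFun (mul_val C (mulFn C b c) a k h2) j
    have e2 : (mulFn C b c).1 j = qk C k (b.1 j) c.1 := congrFun (mul_val C b c k h1) j
    have e3 : (mulFn C b (mulFn C c a)).1 j = qk C k (b.1 j) (mulFn C c a).1 :=
      congrFun (mul_val C b (mulFn C c a) k hca) j
    rw [e1, e2, e3]
    unfold qk
    rw [C.C5 k (b.1 j)]
    congr 1
    funext i
    show C.q k (c.1 i) (fun i : Fin k => a.1 i) = (mulFn C c a).1 i
    exact (congrFun (mul_val C c a k h2) i).symm
  one_mul := by
    intro a
    apply Subtype.ext; funext n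
    show qk C (kOf C a) ((oneC C).1 n) a.1 = a.1 n
    show C.q (kOf C a) (C.e n) (fun i : Fin (kOf C a) => a.1 i) = a.1 n
    by_cases h : n < kOf C a
    · exact C.C1 (kOf C a) ⟨n, h⟩ _
    · rw [C.C2 _ n _ (le_of_not_gt h)]
      exact (kOf_spec C a n (le_of_not_gt h)).symm
  mul_one := by
    intro b
    apply Subtype.ext; funext n
    show C.q (kOf C (oneC C)) (b.1 n) (fun i : Fin _ => (oneC C).1 i) = b.1 n
    exact C.C3 _ (b.1 n)
  L1 := by
    intro n x y z
    apply Subtype.ext; funext j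
    show qk C (kOf C z) ((starFn C n x y).1 j) z.1 = (starFn C n (mulFn C x z) (mulFn C y z)).1 j
    rw [starFn_val, starFn_val]
    by_cases h : j < n
    · rw [if_pos h, if_pos h]; rfl
    · rw [if_neg h, if_neg h]; rfl

lemma mmonoid_isCM : (mmonoid C).IsCM := by
  intro σ hσ x y
  apply Subtype.ext; funext i
  show qk C (kOf C y) ((barFn C σ x).1 i) y.1 = (barFn C σ (mulFn C x y)).1 i
  rw [barFn_val C hσ, barFn_val C hσ]
  rfl

lemma mmonoid_finRanked : (mmonoid C).FinitelyRanked := by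
  intro x
  refine ⟨kOf C x, ?_⟩
  apply Subtype.ext; funext i
  show (starFn C (kOf C x) x (oneC C)).1 i = x.1 i
  rw [starFn_val]
  by_cases h : i < kOf C x
  · rw [if_pos h]
  · rw [if_neg h]
    exact (kOf_spec C x i (le_of_not_gt h)).symm

lemma mmonoid_finDim (hC : C.FinDim) : (mmonoid C).FinDim := by
  intro a n
  have hfin : (⋃ j ∈ Finset.range n, {i : ℕ | ¬ C.IndepOf (a.1 j) i}).Finite :=
    Set.Finite.biUnion (Finset.range n).finite_toSet (fun j _ => hC (a.1 j))
  obtain ⟨m, hm⟩ := hfin.bddAbove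
  refine ⟨m + 1, ?_⟩
  intro b k
  have hindep : ∀ j, j < n → ∀ i, m + 1 ≤ i → C.IndepOf (a.1 j) i := by
    intro j hj i hi
    by_contra h
    have : i ∈ ⋃ j ∈ Finset.range n, {i : ℕ | ¬ C.IndepOf (a.1 j) i} := by
      simp only [Set.mem_iUnion, Set.mem_setOf_eq]
      exact ⟨j, Finset.mem_range.mpr hj, h⟩
    have := hm this
    omega
  set m' := m + 1 with hm'
  set c := starFn C (m' + k) (starFn C m' (oneC C) b) (oneC C) with hc
  have hcbound : ∀ i, m' + k ≤ i → c.1 i = C.e i := by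
    intro i hi
    show (starFn C (m' + k) _ _).1 i = C.e i
    rw [starFn_val, if_neg (by omega)]
    rfl
  have hclow : ∀ i, i < m' → c.1 i = C.e i := by
    intro i hi
    show (starFn C (m' + k) _ _).1 i = C.e i
    rw [starFn_val, if_pos (by omega)]
    show (starFn C m' (oneC C) b).1 i = C.e i
    rw [starFn_val, if_pos hi]
    rfl
  show (mmonoid C).star n ((mmonoid C).mul a c) a = a
  apply Subtype.ext; funext j
  show (starFn C n (mulFn C a c) a).1 j = a.1 j
  rw [starFn_val]
  by_cases hj : j < n
  · rw [if_pos hj]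
    have e1 : (mulFn C a c).1 j = qk C (m' + k) (a.1 j) c.1 :=
      congrFun (mul_val C a c (m' + k) hcbound) j
    rw [e1]
    exact lemJ C (a.1 j) m' (m' + k)
      (fun i h1 _ => hindep j hj i h1)
      (fun i : Fin (m' + k) => c.1 i)
      (fun i hi => hclow i hi)
  · rw [if_neg hj]

end CloneCM


/-- STATEMENT 15: for every clone algebra `C` on `A`, the algebra `C^cm`,
whose carrier is the basic trace `[1]_≡` of the sequence `1 = (e_0, e_1, …)`,
with the sequence merge operations, unit `1` and product
`b·a = (q_k(b_n, a_0, …, a_{k-1}))_n` (for any `k` with `a_i = e_i` for `i ≥ k`),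
is a canonical and finitely ranked cm-monoid; moreover if `C` is finite
dimensional then `C^cm` is a finite dimensional cm-monoid. -/
theorem cloneAlgebra_cm {A : Type u} (C : CloneAlgebra A) :
    ∃ N : MMonoid {s : ℕ → A // {i : ℕ | s i ≠ C.e i}.Finite},
      N.IsCM ∧
      (∀ (n : ℕ) (s u : {s : ℕ → A // {i : ℕ | s i ≠ C.e i}.Finite}),
        ((N.star n s u : {s : ℕ → A // {i : ℕ | s i ≠ C.e i}.Finite}) : ℕ → A) =
          fun i => if i < n then (s : ℕ → A) i else (u : ℕ → A) i) ∧
      (∀ σ : Equiv.Perm ℕ, FinPerm σ → ∀ s : {s : ℕ → A // {i : ℕ | s i ≠ C.e i}.Finite},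
        ((N.bar σ s : {s : ℕ → A // {i : ℕ | s i ≠ C.e i}.Finite}) : ℕ → A) =
          fun i => (s : ℕ → A) (σ i)) ∧
      ((N.one : ℕ → A) = fun i => C.e i) ∧
      (∀ (b a : {s : ℕ → A // {i : ℕ | s i ≠ C.e i}.Finite}) (k : ℕ),
        (∀ i, k ≤ i → (a : ℕ → A) i = C.e i) →
        ((N.mul b a : {s : ℕ → A // {i : ℕ | s i ≠ C.e i}.Finite}) : ℕ → A) =
          fun n => C.q k ((b : ℕ → A) n) (fun i : Fin k => (a : ℕ → A) i)) ∧
      N.FinitelyRanked ∧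
      (C.FinDim → N.FinDim) := by
  refine ⟨CloneCM.mmonoid C, CloneCM.mmonoid_isCM C, ?_, ?_, rfl, ?_, CloneCM.mmonoid_finRanked C,
    CloneCM.mmonoid_finDim C⟩
  · intro n s u
    rfl
  · intro σ hσ s
    funext i
    exact CloneCM.barFn_val C hσ s i
  · intro b a k hk
    exact CloneCM.mul_val C b a k hk
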